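/- Let δ > 0 and let k ≥ 0 be an integer. Then ∑_{n=0}^∞ [(-δ)^{↑(n+k)} · (-δ)^{↑n}] / [(n+k)! · n!] = (-δ)^{↑k} · Γ(1+2δ) / (Γ(1+δ)·Γ(1+δ+k)). -/

import Mathlib

open Finset Real

/-- Rising factorial (Pochhammer symbol): `x^{↑k} = x(x+1)⋯(x+k-1)`. -/
noncomputable def risingFac (x : ℝ) (k : ℕ) : ℝ := ∏ j ∈ Finset.range k, (x + j)

/-!
Dividing by `(-δ)^{↑k} / k!` turns the series into Gauss's `F(c) = ₂F₁(a, b; c; 1)` with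
`a = k - δ`, `b = -δ`, `c = k + 1`. A telescoping identity between the terms gives the
contiguous relation `c (c - a - b) F(c) = (c - a) (c - b) F(c + 1)`; iterating it,
`F(c) = Q_m F(c + m)` for a quotient `Q_m` of rising factorials. As `m → ∞`, `F(c + m) → 1`,
and Euler's limit formula for `Γ` sends `Q_m` to `Γ(c) Γ(c - a - b) / (Γ(c - a) Γ(c - b))`.
The telescoping needs the terms to be `O(n^{-1-δ})`, which follows from Bernoulli's inequality
applied to the ratio of consecutive terms.
-/

open Filter Topology Asymptotics
open scoped Nat

section RisingFac

variable {x y z w : ℝ}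

lemma risingFac_zero (x : ℝ) : risingFac x 0 = 1 := prod_range_zero _

lemma risingFac_succ (x : ℝ) (n : ℕ) : risingFac x (n + 1) = risingFac x n * (x + n) :=
  prod_range_succ _ _

lemma risingFac_succ' (x : ℝ) (n : ℕ) : risingFac x (n + 1) = x * risingFac (x + 1) n := by
  simp only [risingFac, prod_range_succ', Nat.cast_succ, Nat.cast_zero, add_zero]
  rw [mul_comm]
  congr 1
  exact prod_congr rfl fun j _ => by ring

lemma risingFac_add (x : ℝ) (m n : ℕ) :
    risingFac x (m + n) = risingFac x m * risingFac (x + m) n := by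
  simp only [risingFac, prod_range_add, Nat.cast_add, add_assoc]

lemma risingFac_one (n : ℕ) : risingFac 1 n = n ! := by
  induction n with
  | zero => simp [risingFac_zero]
  | succ n ih => rw [risingFac_succ, ih, Nat.factorial_succ]; push_cast; ring

lemma risingFac_pos (hx : 0 < x) (n : ℕ) : 0 < risingFac x n :=
  prod_pos fun _ _ => by positivity

lemma risingFac_le_risingFac (hx : 0 < x) (hxy : x ≤ y) (n : ℕ) :
    risingFac x n ≤ risingFac y n :=
  prod_le_prod (fun _ _ => by positivity) fun _ _ => by linarith

lemma Real.GammaSeq_eq_div_risingFac (s : ℝ) (n : ℕ) :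
    GammaSeq s n = (n : ℝ) ^ s * n ! / risingFac s (n + 1) := rfl

/-- Euler's limit formula, in the balanced form where the powers `n ^ s` cancel. -/
lemma tendsto_risingFac_mul_div (hxyzw : x + y = z + w) (hx : Gamma x ≠ 0) (hy : Gamma y ≠ 0) :
    Tendsto (fun n ↦ risingFac x n * risingFac y n / (risingFac z n * risingFac w n)) atTop
      (𝓝 (Gamma z * Gamma w / (Gamma x * Gamma y))) := by
  rw [← tendsto_add_atTop_iff_nat 1]
  refine ((((GammaSeq_tendsto_Gamma z).mul (GammaSeq_tendsto_Gamma w)).div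
    ((GammaSeq_tendsto_Gamma x).mul (GammaSeq_tendsto_Gamma y)) (mul_ne_zero hx hy))).congr' ?_
  filter_upwards [eventually_ne_atTop 0] with n hn
  have hpow : (n : ℝ) ^ z * (n : ℝ) ^ w = (n : ℝ) ^ x * (n : ℝ) ^ y := by
    rw [← rpow_add (by positivity), ← rpow_add (by positivity), hxyzw]
  change GammaSeq z n * GammaSeq w n / (GammaSeq x n * GammaSeq y n) = _
  simp only [GammaSeq_eq_div_risingFac, div_eq_mul_inv, mul_inv, inv_inv]
  field_simp
  rw [hpow]
  ring

end RisingFac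

lemma hasSum_sub_succ_of_tendsto {u : ℕ → ℝ} {l : ℝ}
    (hs : Summable fun n ↦ u n - u (n + 1)) (hu : Tendsto u atTop (𝓝 l)) :
    HasSum (fun n ↦ u n - u (n + 1)) (u 0 - l) := by
  rw [hs.hasSum_iff_tendsto_nat]
  simp only [sum_range_sub']
  exact tendsto_const_nhds.sub hu

lemma isBigO_of_abs_succ_mul_le {f g : ℕ → ℝ} (hg : ∀ᶠ n in atTop, 0 < g n)
    (h : ∀ᶠ n in atTop, |f (n + 1)| * g n ≤ |f n| * g (n + 1)) : f =O[atTop] g := by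
  obtain ⟨N, hN⟩ := eventually_atTop.1 (hg.and h)
  have hgN := (hN N le_rfl).1
  have key : ∀ n ≥ N, |f n| * g N ≤ |f N| * g n := by
    intro n hn
    induction n, hn using Nat.le_induction with
    | base => exact le_rfl
    | succ n hn ih =>
      obtain ⟨hgn, hstep⟩ := hN n hn
      have hgn' := (hN (n + 1) (by omega)).1
      refine le_of_mul_le_mul_right ?_ hgn
      calc |f (n + 1)| * g N * g n = |f (n + 1)| * g n * g N := by ring
        _ ≤ |f n| * g (n + 1) * g N := by gcongr
        _ = |f n| * g N * g (n + 1) := by ring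
        _ ≤ |f N| * g n * g (n + 1) := by gcongr
        _ = |f N| * g (n + 1) * g n := by ring
  refine IsBigO.of_bound (|f N| / g N) ?_
  filter_upwards [eventually_ge_atTop N] with n hn
  rw [Real.norm_eq_abs, Real.norm_eq_abs, abs_of_pos (hN n hn).1, div_mul_eq_mul_div,
    le_div_iff₀ hgN]
  exact key n hn

/-- Bernoulli's inequality `1 - (1 + δ) t ≤ (1 - t) ^ (1 + δ)` at `t = 1 / (x + 1)`. -/
lemma sub_div_add_one_mul_rpow_neg_le {x δ : ℝ} (hx : 0 < x) (hδ : 0 ≤ δ) :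
    (x - δ) / (x + 1) * x ^ (-(1 + δ)) ≤ (x + 1) ^ (-(1 + δ)) := by
  have hx1 : (x + 1)⁻¹ ≤ 1 := inv_le_one_of_one_le₀ (by linarith)
  have hb := one_add_mul_self_le_rpow_one_add (s := -(x + 1)⁻¹) (by linarith) (p := 1 + δ)
    (by linarith)
  have e1 : 1 + -(x + 1)⁻¹ = x / (x + 1) := by field_simp; ring
  have e2 : 1 + (1 + δ) * -(x + 1)⁻¹ = (x - δ) / (x + 1) := by field_simp; ring
  rw [e1, e2, div_rpow hx.le (by positivity)] at hb
  rw [rpow_neg hx.le, rpow_neg (by positivity)]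
  calc (x - δ) / (x + 1) * (x ^ (1 + δ))⁻¹
      ≤ x ^ (1 + δ) / (x + 1) ^ (1 + δ) * (x ^ (1 + δ))⁻¹ := by gcongr
    _ = ((x + 1) ^ (1 + δ))⁻¹ := by field_simp

lemma tendsto_natCast_mul_of_isBigO_rpow {f : ℕ → ℝ} {δ : ℝ} (hδ : 0 < δ)
    (hf : f =O[atTop] fun n : ℕ ↦ (n : ℝ) ^ (-(1 + δ))) :
    Tendsto (fun n : ℕ ↦ n * f n) atTop (𝓝 0) := by
  refine ((isBigO_refl (fun n : ℕ ↦ (n : ℝ)) atTop).mul hf).trans_tendsto ?_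
  refine ((tendsto_rpow_neg_atTop hδ).comp tendsto_natCast_atTop_atTop).congr' ?_
  filter_upwards [eventually_ne_atTop 0] with n hn
  rw [Function.comp_apply, show -δ = 1 + -(1 + δ) by ring, rpow_add (by positivity), rpow_one]

section Gauss

variable {a b c c' : ℝ}

/-- The `n`-th term of the hypergeometric series `₂F₁(a, b; c; 1)`. -/
noncomputable def gaussTerm (a b c : ℝ) (n : ℕ) : ℝ :=
  risingFac a n * risingFac b n / (risingFac c n * n !)

lemma gaussTerm_zero : gaussTerm a b c 0 = 1 := by simp [gaussTerm, risingFac_zero]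

lemma gaussTerm_succ (n : ℕ) :
    gaussTerm a b c (n + 1) = gaussTerm a b c n * ((a + n) * (b + n) / ((c + n) * (n + 1))) := by
  simp only [gaussTerm]
  rw [div_mul_div_comm, risingFac_succ, risingFac_succ, risingFac_succ, Nat.factorial_succ]
  push_cast
  congr 1 <;> ring

lemma gaussTerm_add_one_right (hc : 0 < c) (n : ℕ) :
    gaussTerm a b (c + 1) n = gaussTerm a b c n * (c / (c + n)) := by
  have h : c * risingFac (c + 1) n = risingFac c n * (c + n) := by
    rw [← risingFac_succ', risingFac_succ]
  have hpos := risingFac_pos hc n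
  have hshift : risingFac (c + 1) n = risingFac c n * (c + n) / c := by
    rw [eq_div_iff hc.ne', mul_comm, h]
  simp only [gaussTerm, hshift]
  field_simp

lemma gaussTerm_contiguous (hc : 0 < c) (n : ℕ) :
    c * (c - a - b) * gaussTerm a b c n - (c - a) * (c - b) * gaussTerm a b (c + 1) n
      = c * n * gaussTerm a b c n - c * (n + 1) * gaussTerm a b c (n + 1) := by
  have hcn : c + n ≠ 0 := by positivity
  rw [gaussTerm_add_one_right hc, gaussTerm_succ]
  field_simp
  ring

lemma abs_gaussTerm_le_of_le (hc : 0 < c) (hcc' : c ≤ c') (n : ℕ) :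
    |gaussTerm a b c' n| ≤ |gaussTerm a b c n| := by
  have hle : risingFac c n * n ! ≤ risingFac c' n * n ! := by
    gcongr
    exact risingFac_le_risingFac hc hcc' n
  have hpos : 0 < risingFac c n * n ! := mul_pos (risingFac_pos hc n) (by positivity)
  simp only [gaussTerm, abs_div, abs_of_pos hpos, abs_of_pos (hpos.trans_le hle)]
  exact div_le_div_of_nonneg_left (abs_nonneg _) hpos hle

lemma abs_gaussTerm_succ_le_of_le (hc : 0 < c) (hcc' : c ≤ c') (n : ℕ) :
    |gaussTerm a b c' (n + 1)| ≤ c / c' * |gaussTerm a b c (n + 1)| := by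
  have hc' : 0 < c' := hc.trans_le hcc'
  have hpos : 0 < risingFac c (n + 1) * (n + 1)! :=
    mul_pos (risingFac_pos hc _) (by positivity)
  have hle : c' / c * (risingFac c (n + 1) * (n + 1)!) ≤ risingFac c' (n + 1) * (n + 1)! := by
    have hmono := risingFac_le_risingFac (by linarith) (by linarith : c + 1 ≤ c' + 1) n
    rw [risingFac_succ' c, risingFac_succ' c']
    calc c' / c * (c * risingFac (c + 1) n * (n + 1)!)
        = c' * risingFac (c + 1) n * (n + 1)! := by field_simp
      _ ≤ c' * risingFac (c' + 1) n * (n + 1)! := by gcongr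
  have hpos' : 0 < c' / c * (risingFac c (n + 1) * (n + 1)!) := by positivity
  simp only [gaussTerm, abs_div, abs_of_pos hpos, abs_of_pos (hpos'.trans_le hle)]
  calc _ ≤ |risingFac a (n + 1) * risingFac b (n + 1)|
          / (c' / c * (risingFac c (n + 1) * (n + 1)!)) :=
        div_le_div_of_nonneg_left (abs_nonneg _) hpos' hle
    _ = _ := by field_simp

lemma summable_gaussTerm_of_le (hc : 0 < c) (hcc' : c ≤ c')
    (hsum : Summable (gaussTerm a b c)) : Summable (gaussTerm a b c') :=
  .of_norm_bounded hsum.abs fun n ↦ abs_gaussTerm_le_of_le hc hcc' n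

lemma tendsto_mul_gaussTerm_of_le (hc : 0 < c) (hcc' : c ≤ c')
    (hdecay : Tendsto (fun n : ℕ ↦ n * gaussTerm a b c n) atTop (𝓝 0)) :
    Tendsto (fun n : ℕ ↦ n * gaussTerm a b c' n) atTop (𝓝 0) := by
  have h := hdecay.abs
  simp only [abs_mul, Nat.abs_cast, abs_zero] at h
  refine squeeze_zero_norm (fun n ↦ ?_) h
  rw [Real.norm_eq_abs, abs_mul, Nat.abs_cast]
  exact mul_le_mul_of_nonneg_left (abs_gaussTerm_le_of_le hc hcc' n) n.cast_nonneg

lemma tsum_gaussTerm_contiguous (hc : 0 < c) (hsum : Summable (gaussTerm a b c))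
    (hdecay : Tendsto (fun n : ℕ ↦ n * gaussTerm a b c n) atTop (𝓝 0)) :
    c * (c - a - b) * ∑' n, gaussTerm a b c n
      = (c - a) * (c - b) * ∑' n, gaussTerm a b (c + 1) n := by
  have hsum' := summable_gaussTerm_of_le hc (le_add_of_nonneg_right zero_le_one) hsum
  have hlhs := (hsum.hasSum.mul_left (c * (c - a - b))).sub
    (hsum'.hasSum.mul_left ((c - a) * (c - b)))
  have hterm : ∀ n : ℕ,
      c * (c - a - b) * gaussTerm a b c n - (c - a) * (c - b) * gaussTerm a b (c + 1) n
        = c * n * gaussTerm a b c n - c * ↑(n + 1) * gaussTerm a b c (n + 1) := fun n ↦ by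
    rw [gaussTerm_contiguous hc, Nat.cast_succ]
  simp only [hterm] at hlhs
  have htel := hasSum_sub_succ_of_tendsto hlhs.summable
    (by simpa only [mul_assoc, mul_zero] using hdecay.const_mul c)
  simp only [Nat.cast_zero, mul_zero, zero_mul, sub_zero] at htel
  linarith [hlhs.unique htel]

lemma tsum_gaussTerm_eq_mul (hc : 0 < c) (hcab : 0 < c - a - b)
    (hsum : Summable (gaussTerm a b c))
    (hdecay : Tendsto (fun n : ℕ ↦ n * gaussTerm a b c n) atTop (𝓝 0)) (m : ℕ) :
    ∑' n, gaussTerm a b c n = risingFac (c - a) m * risingFac (c - b) m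
      / (risingFac c m * risingFac (c - a - b) m) * ∑' n, gaussTerm a b (c + m) n := by
  induction m with
  | zero => simp [risingFac_zero]
  | succ m ih =>
    have hcm : c ≤ c + m := le_add_of_nonneg_right m.cast_nonneg
    have hcontig := tsum_gaussTerm_contiguous (hc.trans_le hcm)
      (summable_gaussTerm_of_le hc hcm hsum) (tendsto_mul_gaussTerm_of_le hc hcm hdecay)
    have hpos₁ := risingFac_pos hc m
    have hpos₂ := risingFac_pos hcab m
    have hpos₃ : 0 < c + m := by positivity
    have hpos₄ : 0 < c - a - b + m := by positivity
    rw [ih, risingFac_succ, risingFac_succ, risingFac_succ, risingFac_succ, Nat.cast_succ,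
      ← add_assoc]
    field_simp
    linear_combination (risingFac (c - a) m * risingFac (c - b) m) * hcontig

lemma abs_tsum_gaussTerm_sub_one_le (hc : 0 < c) (hcc' : c ≤ c')
    (hsum : Summable (gaussTerm a b c)) :
    |∑' n, gaussTerm a b c' n - 1| ≤ c / c' * ∑' n, |gaussTerm a b c (n + 1)| := by
  have hsum' := summable_gaussTerm_of_le hc hcc' hsum
  rw [hsum'.tsum_eq_zero_add, gaussTerm_zero, add_sub_cancel_left, ← Real.norm_eq_abs]
  exact tsum_of_norm_bounded (((summable_nat_add_iff 1).2 hsum.abs).hasSum.mul_left _)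
    fun n ↦ abs_gaussTerm_succ_le_of_le hc hcc' n

lemma tendsto_tsum_gaussTerm_add_nat (hc : 0 < c) (hsum : Summable (gaussTerm a b c)) :
    Tendsto (fun m : ℕ ↦ ∑' n, gaussTerm a b (c + m) n) atTop (𝓝 1) := by
  have hlim :
      Tendsto (fun m : ℕ ↦ c / (c + m) * ∑' n, |gaussTerm a b c (n + 1)|) atTop (𝓝 0) := by
    simpa using (tendsto_const_nhds.div_atTop
      (tendsto_atTop_add_const_left _ c tendsto_natCast_atTop_atTop)).mul_const
      (∑' n, |gaussTerm a b c (n + 1)|)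
  refine tendsto_iff_norm_sub_tendsto_zero.2 (squeeze_zero_norm (fun m ↦ ?_) hlim)
  rw [norm_norm]
  exact abs_tsum_gaussTerm_sub_one_le hc (le_add_of_nonneg_right m.cast_nonneg) hsum

/-- Gauss's summation theorem. -/
theorem tsum_gaussTerm (hc : 0 < c) (hca : 0 < c - a) (hcb : 0 < c - b) (hcab : 0 < c - a - b)
    (hsum : Summable (gaussTerm a b c))
    (hdecay : Tendsto (fun n : ℕ ↦ n * gaussTerm a b c n) atTop (𝓝 0)) :
    ∑' n, gaussTerm a b c n = Gamma c * Gamma (c - a - b) / (Gamma (c - a) * Gamma (c - b)) := by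
  have hratio := tendsto_risingFac_mul_div (x := c - a) (y := c - b) (z := c) (w := c - a - b)
    (by ring) (Gamma_pos_of_pos hca).ne' (Gamma_pos_of_pos hcb).ne'
  have hlim := hratio.mul (tendsto_tsum_gaussTerm_add_nat hc hsum)
  rw [mul_one] at hlim
  exact tendsto_nhds_unique (tendsto_const_nhds.congr (tsum_gaussTerm_eq_mul hc hcab hsum hdecay))
    hlim

end Gauss

lemma isBigO_gaussTerm_neg {a c δ : ℝ} (hac : a ≤ c) (hδ : 0 ≤ δ) :
    gaussTerm a (-δ) c =O[atTop] fun n : ℕ ↦ (n : ℝ) ^ (-(1 + δ)) := by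
  have hn : ∀ᶠ n : ℕ in atTop, max 1 (max δ (1 - a)) ≤ (n : ℝ) :=
    tendsto_natCast_atTop_atTop.eventually_ge_atTop _
  refine isBigO_of_abs_succ_mul_le ?_ ?_
  · filter_upwards [hn] with n hn
    exact rpow_pos_of_pos (by linarith [le_max_left 1 (max δ (1 - a))]) _
  filter_upwards [hn] with n hn
  simp only [max_le_iff] at hn
  obtain ⟨hn1, hnδ, hna⟩ := hn
  have hratio : |(a + n) * (-δ + n) / ((c + n) * (n + 1))| ≤ (n - δ) / (n + 1) := by
    rw [abs_of_nonneg (by apply div_nonneg <;> apply mul_nonneg <;> linarith),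
      div_le_div_iff₀ (by nlinarith) (by linarith)]
    nlinarith [mul_nonneg (mul_nonneg (sub_nonneg.2 hnδ) (by linarith : (0 : ℝ) ≤ n + 1))
      (sub_nonneg.2 hac)]
  rw [gaussTerm_succ, abs_mul, mul_assoc]
  refine mul_le_mul_of_nonneg_left ?_ (abs_nonneg _)
  calc |(a + n) * (-δ + n) / ((c + n) * (n + 1))| * (n : ℝ) ^ (-(1 + δ))
      ≤ (n - δ) / (n + 1) * (n : ℝ) ^ (-(1 + δ)) := by gcongr
    _ ≤ ((n + 1 : ℕ) : ℝ) ^ (-(1 + δ)) := by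
      push_cast
      exact sub_div_add_one_mul_rpow_neg_le (by linarith) hδ

lemma risingFac_add_mul_div_factorial (x : ℝ) (k n : ℕ) :
    risingFac x (n + k) * risingFac x n / ((n + k)! * n !)
      = risingFac x k / k ! * gaussTerm (x + k) x (k + 1) n := by
  have hfac : ((k + n)! : ℝ) = k ! * risingFac (k + 1) n := by
    rw [← risingFac_one, ← risingFac_one, risingFac_add, add_comm (1 : ℝ)]
  rw [add_comm n k, risingFac_add, hfac, gaussTerm]
  ring

theorem stmt2 (δ : ℝ) (hδ : 0 < δ) (k : ℕ) :
    ∑' n : ℕ,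
        risingFac (-δ) (n + k) * risingFac (-δ) n / ((Nat.factorial (n + k)) * (Nat.factorial n))
      = risingFac (-δ) k * Real.Gamma (1 + 2 * δ)
          / (Real.Gamma (1 + δ) * Real.Gamma (1 + δ + k)) := by
  have hO := isBigO_gaussTerm_neg (a := -δ + k) (c := k + 1) (by linarith) hδ.le
  have hgauss := tsum_gaussTerm (by positivity) (by linarith) (by linarith) (by linarith)
    (summable_of_isBigO_nat (summable_nat_rpow.2 (by linarith)) hO)
    (tendsto_natCast_mul_of_isBigO_rpow hδ hO)
  rw [show (k : ℝ) + 1 - (-δ + k) - -δ = 1 + 2 * δ by ring,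
    show (k : ℝ) + 1 - (-δ + k) = 1 + δ by ring, show (k : ℝ) + 1 - -δ = 1 + δ + k by ring,
    Gamma_nat_eq_factorial] at hgauss
  simp only [risingFac_add_mul_div_factorial, tsum_mul_left, hgauss]
  field_simp
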